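/- Let F : ℝ^N → ℝ and g : ℝ^N → ℝ be differentiable at x with ∇F(x) ≠ 0, g(x) ≤ 0, and suppose S is a nonempty set of coordinates such that for each i ∈ S the directional derivative of g at x in direction eᵢ·Δᵢ is strictly negative or g(x) < 0 strictly. Then for any nonnegative coefficients ζᵢ (i ∈ S), not all zero, there exists d̄ > 0 such that the combined update Δ̂ = Σ_{i∈S} ζᵢ·vᵢ with ‖Δ̂‖₁ ≤ d̄ satisfies g(x + Δ̂) ≤ 0, provided additionally that ∇F(x) · Δ̂ ≤ 0 then F(x + Δ̂) ≤ F(x) + o(‖Δ̂‖); in particular, if ∇F(x)·vᵢ < 0 for all i ∈ S, then some such Δ̂ is feasible and strictly decreases F. -/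
import Mathlib

private lemma taylor_bound' {N : ℕ} (f : (Fin N → ℝ) → ℝ) (x : Fin N → ℝ)
    (hf : DifferentiableAt ℝ f x) {c : ℝ} (hc : 0 < c) :
    ∃ r : ℝ, 0 < r ∧ ∀ δ : Fin N → ℝ, ‖δ‖ ≤ r →
      |f (x + δ) - f x - fderiv ℝ f x δ| ≤ c * ‖δ‖ := by
  have h := hasFDerivAt_iff_isLittleO_nhds_zero.mp hf.hasFDerivAt
  have h2 := h.def hc
  rw [Metric.eventually_nhds_iff] at h2
  obtain ⟨ε, hε, hεb⟩ := h2
  refine ⟨ε / 2, by positivity, fun δ hδ => ?_⟩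
  have hd : dist δ (0 : Fin N → ℝ) < ε := by
    rw [dist_zero_right]; linarith
  simpa [Real.norm_eq_abs] using hεb hd

private lemma lin_sum' {N : ℕ} (L : (Fin N → ℝ) →L[ℝ] ℝ) (ζ Δ : Fin N → ℝ) :
    L (fun j => ζ j * Δ j) = ∑ i, ζ i * L (Pi.single i (Δ i)) := by
  conv_lhs => rw [show (fun j => ζ j * Δ j) = ∑ i, Pi.single i (ζ i * Δ i) from
    (Finset.univ_sum_single _).symm]
  rw [map_sum]
  refine Finset.sum_congr rfl fun i _ => ?_
  have h : Pi.single i (ζ i * Δ i) = ζ i • (Pi.single i (Δ i) : Fin N → ℝ) := by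
    ext j; by_cases hj : j = i <;> simp [Pi.single_apply, hj]
  rw [h, map_smul, smul_eq_mul]

private lemma norm_le_l1' {N : ℕ} (δ : Fin N → ℝ) : ‖δ‖ ≤ ∑ j, |δ j| := by
  have hnn : 0 ≤ ∑ j, |δ j| := Finset.sum_nonneg fun _ _ => abs_nonneg _
  rw [pi_norm_le_iff_of_nonneg hnn]
  intro i
  rw [Real.norm_eq_abs]
  exact Finset.single_le_sum (fun j _ => abs_nonneg (δ j)) (Finset.mem_univ i)

private lemma single_ne_zero_of_fderiv_neg {N : ℕ} {f : (Fin N → ℝ) → ℝ} {x Δ : Fin N → ℝ}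
    {i : Fin N} (h : fderiv ℝ f x (Pi.single i (Δ i)) < 0) : Δ i ≠ 0 := by
  intro h0
  rw [h0] at h
  simp at h

/-- Variable elimination (Theorem 2): at a differentiable point, nonnegative
combinations of single-coordinate directions compatible with the (inactive or
strictly decreasing) constraint remain feasible for small enough steps, with
objective value no worse up to first order (`o(‖Δ̂‖)`, stated via an arbitrary
slope `ε`); in particular, if every such single-coordinate direction is a
descent direction of the objective, some combined update is feasible and
strictly decreases the objective. -/
theorem variable_elimination_combined_update
    (N : ℕ) (F g : (Fin N → ℝ) → ℝ) (x Δ : Fin N → ℝ)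
    (hF : DifferentiableAt ℝ F x)
    (hg : DifferentiableAt ℝ g x)
    (hgradF : fderiv ℝ F x ≠ 0)
    (hgx : g x ≤ 0)
    (S : Finset (Fin N)) (hS : S.Nonempty)
    (hdir : ∀ i ∈ S, fderiv ℝ g x (Pi.single i (Δ i)) < 0 ∨ g x < 0) :
    (∀ ε : ℝ, 0 < ε → ∃ dbar : ℝ, 0 < dbar ∧
      ∀ ζ : Fin N → ℝ, (∀ i, 0 ≤ ζ i) → (∀ i ∉ S, ζ i = 0) →
        (∑ j, |ζ j * Δ j|) ≤ dbar →
        g (x + fun j => ζ j * Δ j) ≤ 0 ∧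
        (fderiv ℝ F x (fun j => ζ j * Δ j) ≤ 0 →
          F (x + fun j => ζ j * Δ j) ≤ F x + ε * ∑ j, |ζ j * Δ j|)) ∧
    ((∀ i ∈ S, fderiv ℝ F x (Pi.single i (Δ i)) < 0) →
      ∃ ζ : Fin N → ℝ, (∀ i, 0 ≤ ζ i) ∧ (∀ i ∉ S, ζ i = 0) ∧
        (∃ i ∈ S, ζ i ≠ 0) ∧
        g (x + fun j => ζ j * Δ j) ≤ 0 ∧
        F (x + fun j => ζ j * Δ j) < F x) := by
  have hmain : ∀ ε : ℝ, 0 < ε → ∃ dbar : ℝ, 0 < dbar ∧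
      ∀ ζ : Fin N → ℝ, (∀ i, 0 ≤ ζ i) → (∀ i ∉ S, ζ i = 0) →
        (∑ j, |ζ j * Δ j|) ≤ dbar →
        g (x + fun j => ζ j * Δ j) ≤ 0 ∧
        (fderiv ℝ F x (fun j => ζ j * Δ j) ≤ 0 →
          F (x + fun j => ζ j * Δ j) ≤ F x + ε * ∑ j, |ζ j * Δ j|) := by
    intro ε hε
    obtain ⟨rF, hrF, hFb⟩ := taylor_bound' F x hF hε
    by_cases hneg : g x < 0
    · -- inactive constraint case
      obtain ⟨rg, hrg, hgb⟩ := taylor_bound' g x hg one_pos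
      set M : ℝ := ‖fderiv ℝ g x‖ + 1 with hM
      have hM0 : 0 < M := by positivity
      refine ⟨min (min rg rF) (-g x / M), lt_min (lt_min hrg hrF) (div_pos (neg_pos.mpr hneg) hM0), ?_⟩
      intro ζ hζnn hζ0 hsum
      set δ : Fin N → ℝ := fun j => ζ j * Δ j with hδ
      set s : ℝ := ∑ j, |ζ j * Δ j| with hs
      have hns : ‖δ‖ ≤ s := norm_le_l1' δ
      have hsrg : s ≤ rg := hsum.trans ((min_le_left _ _).trans (min_le_left _ _))
      have hsrF : s ≤ rF := hsum.trans ((min_le_left _ _).trans (min_le_right _ _))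
      have hsgx : s ≤ -g x / M := hsum.trans (min_le_right _ _)
      have hn0 : 0 ≤ ‖δ‖ := norm_nonneg δ
      constructor
      · have h1 := hgb δ (hns.trans hsrg)
        have h2 : fderiv ℝ g x δ ≤ ‖fderiv ℝ g x‖ * ‖δ‖ := by
          calc fderiv ℝ g x δ ≤ ‖fderiv ℝ g x δ‖ := le_abs_self _
          _ ≤ _ := (fderiv ℝ g x).le_opNorm δ
        have h3 : M * s ≤ -g x := by
          rw [← le_div_iff₀' hM0]; exact hsgx
        have habs := abs_le.mp h1
        nlinarith [hns.trans hsrg, hrg.le]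
      · intro hLF
        have h1 := hFb δ (hns.trans hsrF)
        have habs := abs_le.mp h1
        have h2 : ε * ‖δ‖ ≤ ε * s := mul_le_mul_of_nonneg_left hns hε.le
        linarith
    · -- active constraint, all directional derivatives negative
      have hc : ∀ i ∈ S, fderiv ℝ g x (Pi.single i (Δ i)) < 0 :=
        fun i hi => (hdir i hi).resolve_right hneg
      have hΔ : ∀ i ∈ S, Δ i ≠ 0 := fun i hi => single_ne_zero_of_fderiv_neg (hc i hi)
      set κ : ℝ := S.inf' hS (fun i => -(fderiv ℝ g x (Pi.single i (Δ i))) / |Δ i|) with hκdef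
      have hκ : 0 < κ := by
        rw [hκdef, Finset.lt_inf'_iff]
        exact fun i hi => div_pos (neg_pos.mpr (hc i hi)) (abs_pos.mpr (hΔ i hi))
      obtain ⟨rg, hrg, hgb⟩ := taylor_bound' g x hg (half_pos hκ)
      refine ⟨min rg rF, lt_min hrg hrF, ?_⟩
      intro ζ hζnn hζ0 hsum
      set δ : Fin N → ℝ := fun j => ζ j * Δ j with hδ
      set s : ℝ := ∑ j, |ζ j * Δ j| with hs
      have hns : ‖δ‖ ≤ s := norm_le_l1' δ
      have hsrg : s ≤ rg := hsum.trans (min_le_left _ _)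
      have hsrF : s ≤ rF := hsum.trans (min_le_right _ _)
      constructor
      · have hssum : s = ∑ i ∈ S, |ζ i * Δ i| := by
          rw [hs]
          exact (Finset.sum_subset S.subset_univ
            (fun i _ hi => by rw [hζ0 i hi]; simp)).symm
        have hLg : fderiv ℝ g x δ ≤ -κ * s := by
          rw [hδ, lin_sum']
          have hrw : (∑ i, ζ i * fderiv ℝ g x (Pi.single i (Δ i)))
              = ∑ i ∈ S, ζ i * fderiv ℝ g x (Pi.single i (Δ i)) := by
            exact (Finset.sum_subset S.subset_univ
              (fun i _ hi => by rw [hζ0 i hi]; ring)).symm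
          rw [hrw, hssum, Finset.mul_sum]
          refine Finset.sum_le_sum fun i hi => ?_
          have h1 : κ ≤ -(fderiv ℝ g x (Pi.single i (Δ i))) / |Δ i| :=
            Finset.inf'_le _ hi
          have h2 : κ * |Δ i| ≤ -(fderiv ℝ g x (Pi.single i (Δ i))) :=
            (le_div_iff₀ (abs_pos.mpr (hΔ i hi))).mp h1
          have h3 : |ζ i * Δ i| = ζ i * |Δ i| := by
            rw [abs_mul, abs_of_nonneg (hζnn i)]
          rw [h3]
          nlinarith [mul_le_mul_of_nonneg_left h2 (hζnn i), hζnn i]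
        have h1 := hgb δ (hns.trans hsrg)
        have habs := abs_le.mp h1
        have hsnn : 0 ≤ s := Finset.sum_nonneg fun _ _ => abs_nonneg _
        nlinarith
      · intro hLF
        have h1 := hFb δ (hns.trans hsrF)
        have habs := abs_le.mp h1
        have h2 : ε * ‖δ‖ ≤ ε * s := mul_le_mul_of_nonneg_left hns hε.le
        linarith
  refine ⟨hmain, ?_⟩
  intro hFdir
  obtain ⟨i₀, hi₀⟩ := hS
  set b : ℝ := fderiv ℝ F x (Pi.single i₀ (Δ i₀)) with hb
  have hbneg : b < 0 := hFdir i₀ hi₀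
  have hΔ0 : Δ i₀ ≠ 0 := single_ne_zero_of_fderiv_neg hbneg
  have hΔa : 0 < |Δ i₀| := abs_pos.mpr hΔ0
  obtain ⟨dbar, hdbar, hprop⟩ := hmain 1 one_pos
  have hcpos : 0 < -b / (2 * |Δ i₀|) := div_pos (neg_pos.mpr hbneg) (by positivity)
  obtain ⟨rF, hrF, hFb⟩ := taylor_bound' F x hF hcpos
  set t : ℝ := min dbar rF / |Δ i₀| with ht
  have ht0 : 0 < t := div_pos (lt_min hdbar hrF) hΔa
  set ζ : Fin N → ℝ := Pi.single i₀ t with hζ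
  have hζnn : ∀ i, 0 ≤ ζ i := by
    intro i
    rw [hζ, Pi.single_apply]
    split <;> simp [ht0.le]
  have hζ0 : ∀ i ∉ S, ζ i = 0 := by
    intro i hi
    have hne : i ≠ i₀ := fun h => hi (h ▸ hi₀)
    simp [hζ, Pi.single_apply, hne]
  set δ : Fin N → ℝ := fun j => ζ j * Δ j with hδ
  have hst : ∑ j, |ζ j * Δ j| = t * |Δ i₀| := by
    rw [Finset.sum_eq_single i₀]
    · rw [hζ, Pi.single_eq_same, abs_mul, abs_of_nonneg ht0.le]
    · intro j _ hj
      simp [hζ, Pi.single_apply, hj]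
    · exact fun h => absurd (Finset.mem_univ i₀) h
  have hsd : t * |Δ i₀| = min dbar rF := by
    rw [ht]; field_simp
  refine ⟨ζ, hζnn, hζ0, ⟨i₀, hi₀, by rw [hζ, Pi.single_eq_same]; exact ht0.ne'⟩, ?_, ?_⟩
  · exact (hprop ζ hζnn hζ0 (by rw [hst, hsd]; exact min_le_left _ _)).1
  · have hns : ‖δ‖ ≤ t * |Δ i₀| := by
      rw [← hst]; exact norm_le_l1' δ
    have h1 := hFb δ (hns.trans (by rw [hsd]; exact min_le_right _ _))
    have hLF : fderiv ℝ F x δ = t * b := by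
      rw [hδ, lin_sum', Finset.sum_eq_single i₀]
      · rw [hζ, Pi.single_eq_same, hb]
      · intro j _ hj
        simp [hζ, Pi.single_apply, hj]
      · exact fun h => absurd (Finset.mem_univ i₀) h
    have habs := abs_le.mp h1
    have h2 : -b / (2 * |Δ i₀|) * ‖δ‖ ≤ -b / (2 * |Δ i₀|) * (t * |Δ i₀|) :=
      mul_le_mul_of_nonneg_left hns hcpos.le
    have h3 : -b / (2 * |Δ i₀|) * (t * |Δ i₀|) = -b * t / 2 := by
      field_simp
    nlinarith
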